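/- Let x̄ ∈ ℝ and let μ be a Borel probability measure on ℝ with μ((−∞, x̄]) = 1. Let ê ∈ ℝ and let f_ε : ℝ → [0, ∞) be a probability density that is positive and differentiable on [ê, ∞) and such that ε ↦ f_ε'(ε)/f_ε(ε) is nondecreasing on [ê, ∞). For z ≥ x̄ + ê assume ∫_{(−∞,x̄]} f_ε(z − x) dμ(x) < ∞ and define the posterior cdf F(w|z) := (∫_{(−∞,w]} f_ε(z − x) dμ(x)) / (∫_{(−∞,x̄]} f_ε(z − x) dμ(x)). Then for all z2 > z1 ≥ x̄ + ê and all w ≤ x̄: F(w|z1) ≤ F(w|z2), i.e., the posterior given the lower signal weakly first-order stochastically dominates the posterior given the higher signal. If moreover f_ε'/f_ε is strictly increasing on [ê, ∞) and 0 < μ((−∞, w]) < 1, then F(w|z1) < F(w|z2). -/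

import Mathlib

/-!
Since `(log fε)' = fε'/fε` is nondecreasing, the increments of `log fε` over a fixed length grow,
so the likelihood ratio `x ↦ fε (z₂ - x) / fε (z₁ - x)` is nonincreasing on `x ≤ x̄`. Taking `c` to
be its value at `x = w`, the likelihood for `z₂` is at least `c` times the one for `z₁` below `w`
and at most `c` times it above `w`; integrating against `μ` over `(-∞, w]` and `(w, x̄]` and
cross-multiplying gives `F(w|z₁) ≤ F(w|z₂)`, strictly when both pieces carry mass and the ratio
decreases strictly.
-/

open MeasureTheory Set

/-- The posterior cdf of `X` given `Z = z`, where `X ≤ x̄` has prior `μ` and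
the independent noise `ε = Z − X` has density `fε`. -/
noncomputable def postCdfB (μ : Measure ℝ) (fε : ℝ → ℝ) (xbar w z : ℝ) : ℝ :=
  (∫ x in Iic w, fε (z - x) ∂μ) / (∫ x in Iic xbar, fε (z - x) ∂μ)

section Increments

variable {a d : ℝ} {L ψ : ℝ → ℝ}

lemma continuousOn_increment_of_hasDerivWithinAt
    (hL : ∀ e ∈ Ici a, HasDerivWithinAt L (ψ e) (Ici a) e) (hd : 0 ≤ d) :
    ContinuousOn (fun e => L (e + d) - L e) (Ici a) := by
  have hLc : ContinuousOn L (Ici a) := fun e he => (hL e he).continuousWithinAt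
  have hshift : MapsTo (fun e => e + d) (Ici a) (Ici a) := fun e (he : a ≤ e) =>
    show a ≤ e + d by linarith
  exact (hLc.comp (continuousOn_id.add continuousOn_const) hshift).sub hLc

lemma hasDerivAt_increment_of_hasDerivWithinAt
    (hL : ∀ e ∈ Ici a, HasDerivWithinAt L (ψ e) (Ici a) e) (hd : 0 ≤ d) {e : ℝ} (he : a < e) :
    HasDerivAt (fun e => L (e + d) - L e) (ψ (e + d) - ψ e) e := by
  have hed : a < e + d := by linarith
  exact ((hL _ hed.le).hasDerivAt (Ici_mem_nhds hed)).comp_add_const e d |>.sub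
    ((hL e he.le).hasDerivAt (Ici_mem_nhds he))

lemma monotoneOn_increment_of_monotoneOn_deriv
    (hL : ∀ e ∈ Ici a, HasDerivWithinAt L (ψ e) (Ici a) e) (hψ : MonotoneOn ψ (Ici a))
    (hd : 0 ≤ d) : MonotoneOn (fun e => L (e + d) - L e) (Ici a) := by
  refine monotoneOn_of_deriv_nonneg (convex_Ici a)
    (continuousOn_increment_of_hasDerivWithinAt hL hd) ?_ ?_ <;> rw [interior_Ici]
  · exact fun e he => (hasDerivAt_increment_of_hasDerivWithinAt hL hd he).differentiableAt
      |>.differentiableWithinAt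
  · intro e (he : a < e)
    rw [(hasDerivAt_increment_of_hasDerivWithinAt hL hd he).deriv, sub_nonneg]
    exact hψ he.le (show a ≤ e + d by linarith) (by linarith)

lemma strictMonoOn_increment_of_strictMonoOn_deriv
    (hL : ∀ e ∈ Ici a, HasDerivWithinAt L (ψ e) (Ici a) e) (hψ : StrictMonoOn ψ (Ici a))
    (hd : 0 < d) : StrictMonoOn (fun e => L (e + d) - L e) (Ici a) := by
  refine strictMonoOn_of_deriv_pos (convex_Ici a)
    (continuousOn_increment_of_hasDerivWithinAt hL hd.le) ?_
  rw [interior_Ici]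
  intro e (he : a < e)
  rw [(hasDerivAt_increment_of_hasDerivWithinAt hL hd.le he).deriv, sub_pos]
  exact hψ he.le (show a ≤ e + d by linarith) (by linarith)

end Increments

section LikelihoodRatio

variable {a z₁ z₂ : ℝ} {f f' : ℝ → ℝ}

lemma log_likelihoodRatio_eq (hpos : ∀ e ∈ Ici a, 0 < f e) {x : ℝ} (hx : x ∈ Iic (z₁ - a))
    (hz : z₁ ≤ z₂) :
    Real.log (f (z₂ - x) / f (z₁ - x)) =
      Real.log (f (z₁ - x + (z₂ - z₁))) - Real.log (f (z₁ - x)) := by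
  have hx₁ : a ≤ z₁ - x := by linarith [hx.out]
  rw [sub_add_sub_cancel', Real.log_div (hpos _ (show a ≤ z₂ - x by linarith)).ne' (hpos _ hx₁).ne']

lemma antitoneOn_likelihoodRatio (hpos : ∀ e ∈ Ici a, 0 < f e)
    (hf : ∀ e ∈ Ici a, HasDerivWithinAt f (f' e) (Ici a) e)
    (hmono : MonotoneOn (fun e => f' e / f e) (Ici a)) (hz : z₁ ≤ z₂) :
    AntitoneOn (fun x => f (z₂ - x) / f (z₁ - x)) (Iic (z₁ - a)) := by
  intro x hx y hy hxy
  have hratio_pos : ∀ u ∈ Iic (z₁ - a), 0 < f (z₂ - u) / f (z₁ - u) := fun u (hu : u ≤ z₁ - a) =>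
    div_pos (hpos _ (show a ≤ z₂ - u by linarith)) (hpos _ (show a ≤ z₁ - u by linarith))
  rw [← Real.log_le_log_iff (hratio_pos y hy) (hratio_pos x hx),
    log_likelihoodRatio_eq hpos hx hz, log_likelihoodRatio_eq hpos hy hz]
  exact monotoneOn_increment_of_monotoneOn_deriv (fun e he => (hf e he).log (hpos e he).ne')
    hmono (sub_nonneg.2 hz) (show a ≤ z₁ - y by linarith [hy.out])
    (show a ≤ z₁ - x by linarith [hx.out]) (by linarith)

lemma strictAntiOn_likelihoodRatio (hpos : ∀ e ∈ Ici a, 0 < f e)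
    (hf : ∀ e ∈ Ici a, HasDerivWithinAt f (f' e) (Ici a) e)
    (hmono : StrictMonoOn (fun e => f' e / f e) (Ici a)) (hz : z₁ < z₂) :
    StrictAntiOn (fun x => f (z₂ - x) / f (z₁ - x)) (Iic (z₁ - a)) := by
  intro x hx y hy hxy
  have hratio_pos : ∀ u ∈ Iic (z₁ - a), 0 < f (z₂ - u) / f (z₁ - u) := fun u (hu : u ≤ z₁ - a) =>
    div_pos (hpos _ (show a ≤ z₂ - u by linarith)) (hpos _ (show a ≤ z₁ - u by linarith))
  rw [← Real.log_lt_log_iff (hratio_pos y hy) (hratio_pos x hx),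
    log_likelihoodRatio_eq hpos hx hz.le, log_likelihoodRatio_eq hpos hy hz.le]
  exact strictMonoOn_increment_of_strictMonoOn_deriv (fun e he => (hf e he).log (hpos e he).ne')
    hmono (sub_pos.2 hz) (show a ≤ z₁ - y by linarith [hy.out])
    (show a ≤ z₁ - x by linarith [hx.out]) (by linarith)

end LikelihoodRatio

section SingleCrossing

variable {α : Type*} [MeasurableSpace α] {μ : Measure α} {s t : Set α} {f g : α → ℝ} {c : ℝ}

lemma setIntegral_pos_of_forall_pos (hs : MeasurableSet s) (hf : IntegrableOn f s μ)
    (hpos : ∀ x ∈ s, 0 < f x) (hμs : 0 < μ s) : 0 < ∫ x in s, f x ∂μ := by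
  rw [setIntegral_pos_iff_support_of_nonneg_ae
    (ae_restrict_of_forall_mem hs fun x hx => (hpos x hx).le) hf]
  exact hμs.trans_le (measure_mono fun x hx => ⟨(hpos x hx).ne', hx⟩)

lemma const_mul_setIntegral_le (hs : MeasurableSet s) (hf : IntegrableOn f s μ)
    (hg : IntegrableOn g s μ) (hfg : ∀ x ∈ s, c * f x ≤ g x) :
    c * ∫ x in s, f x ∂μ ≤ ∫ x in s, g x ∂μ := by
  rw [← integral_const_mul]
  exact setIntegral_mono_on (hf.const_mul c) hg hs hfg

lemma setIntegral_lt_const_mul (hs : MeasurableSet s) (hf : IntegrableOn f s μ)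
    (hg : IntegrableOn g s μ) (hgf : ∀ x ∈ s, g x < c * f x) (hμs : 0 < μ s) :
    ∫ x in s, g x ∂μ < c * ∫ x in s, f x ∂μ := by
  have hgap := setIntegral_pos_of_forall_pos (f := fun x => c * f x - g x) hs
    ((hf.const_mul c).sub hg) (fun x hx => sub_pos.2 (hgf x hx)) hμs
  rwa [integral_sub (hf.const_mul c) hg, integral_const_mul, sub_pos] at hgap

theorem setIntegral_div_le_of_single_crossing (hs : MeasurableSet s) (ht : MeasurableSet t)
    (hst : Disjoint s t) (hf : IntegrableOn f (s ∪ t) μ) (hg : IntegrableOn g (s ∪ t) μ)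
    (hf₀ : ∀ x ∈ s ∪ t, 0 ≤ f x) (hgs : ∀ x ∈ s, c * f x ≤ g x) (hgt : ∀ x ∈ t, g x ≤ c * f x)
    (hfpos : 0 < ∫ x in s ∪ t, f x ∂μ) (hgpos : 0 < ∫ x in s ∪ t, g x ∂μ) :
    (∫ x in s, f x ∂μ) / (∫ x in s ∪ t, f x ∂μ) ≤ (∫ x in s, g x ∂μ) / ∫ x in s ∪ t, g x ∂μ := by
  rw [div_le_div_iff₀ hfpos hgpos, setIntegral_union hst ht (hf.mono_set subset_union_left)
    (hf.mono_set subset_union_right), setIntegral_union hst ht (hg.mono_set subset_union_left)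
    (hg.mono_set subset_union_right)]
  have hfs : 0 ≤ ∫ x in s, f x ∂μ := setIntegral_nonneg hs fun x hx => hf₀ x (.inl hx)
  have hft : 0 ≤ ∫ x in t, f x ∂μ := setIntegral_nonneg ht fun x hx => hf₀ x (.inr hx)
  have hS := const_mul_setIntegral_le hs (hf.mono_set subset_union_left)
    (hg.mono_set subset_union_left) hgs
  have hT : ∫ x in t, g x ∂μ ≤ c * ∫ x in t, f x ∂μ := by
    rw [← integral_const_mul]
    exact setIntegral_mono_on (hg.mono_set subset_union_right)
      ((hf.mono_set subset_union_right).const_mul c) ht hgt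
  nlinarith [mul_le_mul_of_nonneg_left hT hfs, mul_le_mul_of_nonneg_right hS hft]

theorem setIntegral_div_lt_of_single_crossing (hs : MeasurableSet s) (ht : MeasurableSet t)
    (hst : Disjoint s t) (hf : IntegrableOn f (s ∪ t) μ) (hg : IntegrableOn g (s ∪ t) μ)
    (hf₀ : ∀ x ∈ t, 0 ≤ f x) (hgs : ∀ x ∈ s, c * f x ≤ g x) (hgt : ∀ x ∈ t, g x < c * f x)
    (hμt : 0 < μ t) (hfs : 0 < ∫ x in s, f x ∂μ)
    (hfpos : 0 < ∫ x in s ∪ t, f x ∂μ) (hgpos : 0 < ∫ x in s ∪ t, g x ∂μ) :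
    (∫ x in s, f x ∂μ) / (∫ x in s ∪ t, f x ∂μ) < (∫ x in s, g x ∂μ) / ∫ x in s ∪ t, g x ∂μ := by
  rw [div_lt_div_iff₀ hfpos hgpos, setIntegral_union hst ht (hf.mono_set subset_union_left)
    (hf.mono_set subset_union_right), setIntegral_union hst ht (hg.mono_set subset_union_left)
    (hg.mono_set subset_union_right)]
  have hft : 0 ≤ ∫ x in t, f x ∂μ := setIntegral_nonneg ht hf₀
  have hS := const_mul_setIntegral_le hs (hf.mono_set subset_union_left)
    (hg.mono_set subset_union_left) hgs
  have hT := setIntegral_lt_const_mul ht (hf.mono_set subset_union_right)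
    (hg.mono_set subset_union_right) hgt hμt
  nlinarith [mul_lt_mul_of_pos_left hT hfs, mul_le_mul_of_nonneg_right hS hft]

end SingleCrossing

lemma measure_Ioc_pos_of_measure_Iic_lt {α : Type*} [LinearOrder α] [MeasurableSpace α]
    {μ : Measure α} {a b : α} (hab : a ≤ b) (h : μ (Iic a) < μ (Iic b)) : 0 < μ (Ioc a b) := by
  refine pos_iff_ne_zero.2 fun h0 => h.not_ge ?_
  calc μ (Iic b) = μ (Iic a ∪ Ioc a b) := by rw [Iic_union_Ioc_eq_Iic hab]
    _ ≤ μ (Iic a) + μ (Ioc a b) := measure_union_le _ _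
    _ = μ (Iic a) := by rw [h0, add_zero]

theorem stmt_16_general (xbar ehat : ℝ) (μ : Measure ℝ)
    (hμ : μ (Iic xbar) = 1)
    (fε fε' : ℝ → ℝ)
    (hpos : ∀ e ∈ Ici ehat, 0 < fε e)
    (hderiv : ∀ e ∈ Ici ehat, HasDerivWithinAt fε (fε' e) (Ici ehat) e)
    (hmono : MonotoneOn (fun e => fε' e / fε e) (Ici ehat))
    (hint : ∀ z, xbar + ehat ≤ z → Integrable (fun x => fε (z - x)) μ) :
    ∀ z1 z2 : ℝ, xbar + ehat ≤ z1 → z1 < z2 → ∀ w ≤ xbar,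
      postCdfB μ fε xbar w z1 ≤ postCdfB μ fε xbar w z2 ∧
      (StrictMonoOn (fun e => fε' e / fε e) (Ici ehat) →
        0 < μ (Iic w) → μ (Iic w) < 1 →
        postCdfB μ fε xbar w z1 < postCdfB μ fε xbar w z2) := by
  intro z1 z2 hz1 hz12 w hw
  have hz2 : xbar + ehat ≤ z2 := hz1.trans hz12.le
  have hdom : Iic xbar ⊆ Iic (z1 - ehat) := Iic_subset_Iic.2 (by linarith)
  have hlik : ∀ z, xbar + ehat ≤ z → ∀ x ∈ Iic xbar, 0 < fε (z - x) := fun z hz x (hx : x ≤ xbar) =>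
    hpos _ (show ehat ≤ z - x by linarith)
  have hden : ∀ z, xbar + ehat ≤ z → 0 < ∫ x in Iic xbar, fε (z - x) ∂μ := fun z hz =>
    setIntegral_pos_of_forall_pos measurableSet_Iic (hint z hz).integrableOn (hlik z hz)
      (by rw [hμ]; exact one_pos)
  set c := fε (z2 - w) / fε (z1 - w)
  have hbelow : ∀ x ∈ Iic w, c * fε (z1 - x) ≤ fε (z2 - x) := fun x (hx : x ≤ w) =>
    (le_div_iff₀ (hlik z1 hz1 x (hx.trans hw))).1 <|
      (antitoneOn_likelihoodRatio hpos hderiv hmono hz12.le).mono hdom (hx.trans hw) hw hx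
  have habove : ∀ x ∈ Ioc w xbar, fε (z2 - x) ≤ c * fε (z1 - x) := fun x hx =>
    (div_le_iff₀ (hlik z1 hz1 x hx.2)).1 <|
      (antitoneOn_likelihoodRatio hpos hderiv hmono hz12.le).mono hdom hw hx.2 hx.1.le
  unfold postCdfB
  rw [← Iic_union_Ioc_eq_Iic hw] at hden hlik ⊢
  refine ⟨setIntegral_div_le_of_single_crossing measurableSet_Iic measurableSet_Ioc
    (Iic_disjoint_Ioc le_rfl) (hint z1 hz1).integrableOn (hint z2 hz2).integrableOn
    (fun x hx => (hlik z1 hz1 x hx).le) hbelow habove (hden z1 hz1) (hden z2 hz2), ?_⟩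
  intro hsmono hμw hμw1
  have habove_strict : ∀ x ∈ Ioc w xbar, fε (z2 - x) < c * fε (z1 - x) := fun x hx =>
    (div_lt_iff₀ (hlik z1 hz1 x (.inr hx))).1 <|
      (strictAntiOn_likelihoodRatio hpos hderiv hsmono hz12).mono hdom hw hx.2 hx.1
  exact setIntegral_div_lt_of_single_crossing measurableSet_Iic measurableSet_Ioc
    (Iic_disjoint_Ioc le_rfl) (hint z1 hz1).integrableOn (hint z2 hz2).integrableOn
    (fun x hx => (hlik z1 hz1 x (.inr hx)).le) hbelow habove_strict
    (measure_Ioc_pos_of_measure_Iic_lt hw (hμ ▸ hμw1))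
    (setIntegral_pos_of_forall_pos measurableSet_Iic (hint z1 hz1).integrableOn
      (fun x hx => hlik z1 hz1 x (.inl hx)) hμw) (hden z1 hz1) (hden z2 hz2)

/-- Let `X ≤ x̄` have prior `μ` and let the noise density `fε`
be positive and differentiable on `[ê, ∞)` (derivative `fε'` there), with
`fε'/fε` nondecreasing on `[ê, ∞)`. Then for all signals
`z2 > z1 ≥ x̄ + ê` and all `w ≤ x̄`, `F(w|z1) ≤ F(w|z2)`; and if `fε'/fε` is
strictly increasing on `[ê, ∞)` and `0 < μ((−∞,w]) < 1`, then
`F(w|z1) < F(w|z2)`. -/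
theorem stmt_16 (xbar ehat : ℝ) (μ : Measure ℝ) [IsProbabilityMeasure μ]
    (hμ : μ (Iic xbar) = 1)
    (fε fε' : ℝ → ℝ)
    (hmeas : Measurable fε) (hnn : ∀ e, 0 ≤ fε e)
    (hdens : (∫ e, fε e) = 1)
    (hpos : ∀ e ∈ Ici ehat, 0 < fε e)
    (hderiv : ∀ e ∈ Ici ehat, HasDerivWithinAt fε (fε' e) (Ici ehat) e)
    (hmono : MonotoneOn (fun e => fε' e / fε e) (Ici ehat))
    (hint : ∀ z, xbar + ehat ≤ z → Integrable (fun x => fε (z - x)) μ) :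
    ∀ z1 z2 : ℝ, xbar + ehat ≤ z1 → z1 < z2 → ∀ w ≤ xbar,
      postCdfB μ fε xbar w z1 ≤ postCdfB μ fε xbar w z2 ∧
      (StrictMonoOn (fun e => fε' e / fε e) (Ici ehat) →
        0 < μ (Iic w) → μ (Iic w) < 1 →
        postCdfB μ fε xbar w z1 < postCdfB μ fε xbar w z2) :=
  stmt_16_general xbar ehat μ hμ fε fε' hpos hderiv hmono hint
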